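/- arXiv:1308.5541 — 5 statements merged into one kernel-verified Lean document; each statement's English description precedes it below -/
import Mathlib

section
/- For every integer n ≥ 2, the inequalities 2 log n − log(4π log n) < b_n² < 2 log n hold. -/
/-!
Write `Q = 1 - Φ` and `φ = Φ'`, so that `b = bₙ` is the point where `Q b = 1 / n` and `Q` is
strictly decreasing. The Chernoff-type bound `Q x ≤ exp (-x² / 2) / 2` for `x ≥ 0`, taken at `b`,
gives `b² < 2 log n`. Birnbaum's bound `Q x ≥ (√(x² + 4) - x) / 2 * φ x` holds because the
difference of the two sides is antitone and tends to `0`. At `x₀ = √(2 log n - log (4π log n))` one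
has `φ x₀ = √(2 log n) / n`, and `log (4π log n) > 2` makes Birnbaum's bound exceed `1 / n`, so
`Q x₀ > Q b` and `x₀ < b`.
-/

open Real

noncomputable def stdNormalCDF (x : ℝ) : ℝ :=
  (Real.sqrt (2 * Real.pi))⁻¹ * ∫ t in Set.Iic x, Real.exp (-t ^ 2 / 2)

open Set MeasureTheory Filter Topology

lemma exp_neg_sq_div_two_eq (t : ℝ) : exp (-t ^ 2 / 2) = exp (-(1 / 2) * t ^ 2) := by
  ring_nf

lemma integrable_exp_neg_sq_div_two : Integrable fun t : ℝ => exp (-t ^ 2 / 2) := by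
  simpa only [exp_neg_sq_div_two_eq] using integrable_exp_neg_mul_sq (b := 1 / 2) (by norm_num)

lemma integral_exp_neg_sq_div_two : ∫ t, exp (-t ^ 2 / 2) = √(2 * π) := by
  simp only [exp_neg_sq_div_two_eq, integral_gaussian]
  congr 1; field_simp

lemma integral_Ioi_zero_exp_neg_sq_div_two :
    ∫ t in Ioi 0, exp (-t ^ 2 / 2) = √(2 * π) / 2 := by
  simp only [exp_neg_sq_div_two_eq, integral_gaussian_Ioi]
  congr 2; field_simp

lemma one_sub_stdNormalCDF (x : ℝ) :
    1 - stdNormalCDF x = (√(2 * π))⁻¹ * ∫ t in Ioi x, exp (-t ^ 2 / 2) := by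
  have hsplit := integral_add_compl (measurableSet_Iic (a := x)) integrable_exp_neg_sq_div_two
  rw [compl_Iic, integral_exp_neg_sq_div_two] at hsplit
  have hcancel : (√(2 * π))⁻¹ * √(2 * π) = 1 := inv_mul_cancel₀ (by positivity)
  rw [stdNormalCDF]
  linear_combination (-(√(2 * π))⁻¹) * hsplit - hcancel

lemma stdNormalCDF_zero : stdNormalCDF 0 = 1 / 2 := by
  have h := one_sub_stdNormalCDF 0
  rw [integral_Ioi_zero_exp_neg_sq_div_two, mul_div_assoc', inv_mul_cancel₀ (by positivity)] at h
  linarith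

lemma stdNormalCDF_le_one (x : ℝ) : stdNormalCDF x ≤ 1 := by
  have : 0 ≤ 1 - stdNormalCDF x := by
    rw [one_sub_stdNormalCDF]
    exact mul_nonneg (by positivity)
      (setIntegral_nonneg measurableSet_Ioi fun t _ => (exp_pos _).le)
  linarith

noncomputable def stdNormalPDF (x : ℝ) : ℝ := (√(2 * π))⁻¹ * exp (-x ^ 2 / 2)

lemma stdNormalPDF_pos (x : ℝ) : 0 < stdNormalPDF x := by
  unfold stdNormalPDF; positivity

lemma hasDerivAt_stdNormalCDF (x : ℝ) : HasDerivAt stdNormalCDF (stdNormalPDF x) x := by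
  have hcont : Continuous fun t : ℝ => exp (-t ^ 2 / 2) := by fun_prop
  have hIic : (fun y => ∫ t in Iic y, exp (-t ^ 2 / 2)) =
      fun y => (∫ t in Iic 0, exp (-t ^ 2 / 2)) + ∫ t in (0 : ℝ)..y, exp (-t ^ 2 / 2) := by
    funext y
    rw [← intervalIntegral.integral_Iic_sub_Iic integrable_exp_neg_sq_div_two.integrableOn
      integrable_exp_neg_sq_div_two.integrableOn]
    ring
  have hint : HasDerivAt (fun y => ∫ t in Iic y, exp (-t ^ 2 / 2)) (exp (-x ^ 2 / 2)) x := by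
    rw [hIic]
    exact (intervalIntegral.integral_hasDerivAt_right (hcont.intervalIntegrable 0 x)
      (hcont.stronglyMeasurableAtFilter _ _) hcont.continuousAt).const_add _
  exact hint.const_mul _

lemma stdNormalCDF_strictMono : StrictMono stdNormalCDF :=
  strictMono_of_hasDerivAt_pos hasDerivAt_stdNormalCDF stdNormalPDF_pos

lemma setIntegral_Ioi_comp_sub_right {E : Type*} [NormedAddCommGroup E] [NormedSpace ℝ E]
    (f : ℝ → E) (x : ℝ) : ∫ t in Ioi x, f (t - x) = ∫ t in Ioi 0, f t := by
  have hpre : (· + x) ⁻¹' Ioi x = Ioi (0 : ℝ) := by ext; simp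
  rw [← (measurePreserving_add_right volume x).setIntegral_preimage_emb
    (Homeomorph.addRight x).isClosedEmbedding.measurableEmbedding, hpre]
  simp

lemma one_sub_stdNormalCDF_le {x : ℝ} (hx : 0 ≤ x) :
    1 - stdNormalCDF x ≤ exp (-x ^ 2 / 2) / 2 := by
  have hbound : ∫ t in Ioi x, exp (-t ^ 2 / 2) ≤
      ∫ t in Ioi x, exp (-x ^ 2 / 2) * exp (-(t - x) ^ 2 / 2) := by
    refine setIntegral_mono_on integrable_exp_neg_sq_div_two.integrableOn
      ((integrable_exp_neg_sq_div_two.comp_sub_right x).const_mul _).integrableOn measurableSet_Ioi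
      fun t ht => ?_
    rw [← exp_add]
    -- `t² = x² + (t - x)² + 2 x (t - x)`
    exact exp_le_exp.2 (by nlinarith [mem_Ioi.1 ht])
  rw [integral_const_mul, setIntegral_Ioi_comp_sub_right (fun t => exp (-t ^ 2 / 2)),
    integral_Ioi_zero_exp_neg_sq_div_two] at hbound
  rw [one_sub_stdNormalCDF]
  calc (√(2 * π))⁻¹ * ∫ t in Ioi x, exp (-t ^ 2 / 2)
      ≤ (√(2 * π))⁻¹ * (exp (-x ^ 2 / 2) * (√(2 * π) / 2)) := by gcongr
    _ = exp (-x ^ 2 / 2) / 2 := by field_simp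

noncomputable def birnbaumBound (x : ℝ) : ℝ := (√(x ^ 2 + 4) - x) / 2 * stdNormalPDF x

lemma hasDerivAt_stdNormalPDF (x : ℝ) : HasDerivAt stdNormalPDF (-x * stdNormalPDF x) x := by
  have h : HasDerivAt (fun y : ℝ => -y ^ 2 / 2) (-x) x :=
    ((hasDerivAt_pow 2 x).fun_neg.div_const 2).congr_deriv (by ring)
  exact (h.exp.const_mul (√(2 * π))⁻¹).congr_deriv (by unfold stdNormalPDF; ring)

lemma hasDerivAt_one_sub_stdNormalCDF_sub_birnbaumBound (x : ℝ) :
    HasDerivAt (fun y => 1 - stdNormalCDF y - birnbaumBound y)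
      ((x * (x ^ 2 + 3) - √(x ^ 2 + 4) * (x ^ 2 + 1)) / (2 * √(x ^ 2 + 4)) * stdNormalPDF x) x := by
  have hsq : HasDerivAt (fun y => √(y ^ 2 + 4)) (2 * x / (2 * √(x ^ 2 + 4))) x := by
    simpa using ((hasDerivAt_pow 2 x).add_const 4).sqrt (by positivity)
  have hs2 : √(x ^ 2 + 4) ^ 2 = x ^ 2 + 4 := sq_sqrt (by positivity)
  refine (((hasDerivAt_stdNormalCDF x).const_sub 1).sub
    (((hsq.fun_sub (hasDerivAt_id' x)).div_const 2).mul (hasDerivAt_stdNormalPDF x))).congr_deriv ?_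
  field_simp
  linear_combination (x * stdNormalPDF x) * hs2

lemma mul_sq_add_three_lt_sqrt_mul (x : ℝ) : x * (x ^ 2 + 3) < √(x ^ 2 + 4) * (x ^ 2 + 1) := by
  have hs2 : √(x ^ 2 + 4) ^ 2 = x ^ 2 + 4 := sq_sqrt (by positivity)
  refine (le_abs_self _).trans_lt (abs_lt_of_sq_lt_sq ?_ (by positivity))
  rw [mul_pow, mul_pow, hs2]
  nlinarith

lemma antitone_one_sub_stdNormalCDF_sub_birnbaumBound :
    Antitone fun x => 1 - stdNormalCDF x - birnbaumBound x := by
  refine antitone_of_hasDerivAt_nonpos hasDerivAt_one_sub_stdNormalCDF_sub_birnbaumBound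
    fun x => mul_nonpos_of_nonpos_of_nonneg ?_ (stdNormalPDF_pos x).le
  exact div_nonpos_of_nonpos_of_nonneg (sub_nonpos.2 (mul_sq_add_three_lt_sqrt_mul x).le)
    (by positivity)

lemma tendsto_stdNormalPDF_atTop : Tendsto stdNormalPDF atTop (𝓝 0) := by
  have h : Tendsto (fun x : ℝ => -x ^ 2 / 2) atTop atBot :=
    (tendsto_neg_atBot_iff.2 (tendsto_pow_atTop two_ne_zero)).atBot_div_const two_pos
  have hlim := (tendsto_exp_atBot.comp h).const_mul (√(2 * π))⁻¹
  rw [mul_zero] at hlim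
  exact hlim

lemma tendsto_birnbaumBound_atTop : Tendsto birnbaumBound atTop (𝓝 0) := by
  refine tendsto_of_tendsto_of_tendsto_of_le_of_le' tendsto_const_nhds tendsto_stdNormalPDF_atTop
    ?_ ?_
  · filter_upwards with x
    have : x < √(x ^ 2 + 4) := (le_abs_self x).trans_lt
      (by rw [← sqrt_sq_eq_abs]; exact sqrt_lt_sqrt (sq_nonneg x) (by linarith))
    exact mul_nonneg (by linarith) (stdNormalPDF_pos x).le
  · filter_upwards [eventually_ge_atTop 0] with x hx
    have : √(x ^ 2 + 4) ≤ x + 2 := (sqrt_le_left (by linarith)).2 (by nlinarith)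
    exact mul_le_of_le_one_left (stdNormalPDF_pos x).le (by linarith)

lemma birnbaumBound_le_one_sub_stdNormalCDF (x : ℝ) : birnbaumBound x ≤ 1 - stdNormalCDF x := by
  suffices 0 ≤ 1 - stdNormalCDF x - birnbaumBound x by linarith
  have hlim := tendsto_birnbaumBound_atTop.neg
  rw [neg_zero] at hlim
  refine le_of_tendsto hlim ?_
  filter_upwards [eventually_ge_atTop x] with y hy
  linarith [antitone_one_sub_stdNormalCDF_sub_birnbaumBound hy, stdNormalCDF_le_one y]

lemma two_lt_log_four_pi_mul {L : ℝ} (hL : log 2 ≤ L) : 2 < log (4 * π * L) := by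
  have hlog2 := log_two_gt_d9
  have hpi := pi_gt_d6
  have he : exp 2 < 7.39 := by
    rw [show (2 : ℝ) = 1 + 1 by norm_num, exp_add]
    nlinarith [exp_one_lt_d9, exp_pos 1]
  rw [lt_log_iff_exp_lt (mul_pos (by positivity) ((log_pos one_lt_two).trans_le hL))]
  nlinarith

lemma stdNormalPDF_eq_of_sq_eq {L x : ℝ} (hL : 0 < L) (hx : x ^ 2 = 2 * L - log (4 * π * L)) :
    stdNormalPDF x = √(2 * L) * exp (-L) := by
  have hexp : exp (-x ^ 2 / 2) = √(4 * π * L) * exp (-L) := by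
    rw [hx, show -(2 * L - log (4 * π * L)) / 2 = log (4 * π * L) / 2 + -L by ring, exp_add,
      exp_half, exp_log (by positivity)]
  rw [stdNormalPDF, hexp, show 4 * π * L = 2 * π * (2 * L) by ring,
    sqrt_mul (by positivity : 0 ≤ 2 * π)]
  field_simp

lemma exp_neg_lt_birnbaumBound {L : ℝ} (hL : log 2 ≤ L) (hA : 0 ≤ 2 * L - log (4 * π * L)) :
    exp (-L) < birnbaumBound √(2 * L - log (4 * π * L)) := by
  set A := 2 * L - log (4 * π * L)
  set c := √(2 * L)
  have hL0 : 0 < L := (log_pos one_lt_two).trans_le hL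
  have hc2 : c ^ 2 = 2 * L := sq_sqrt (by positivity)
  have hc1 : 1 < c := by
    rw [← one_lt_sq_iff₀ (sqrt_nonneg _), hc2]
    linarith [log_two_gt_d9]
  have hc0 : 0 < c := one_pos.trans hc1
  have hlog := two_lt_log_four_pi_mul hL
  -- `(c ± 1 / c) ^ 2 = 2 L ± 2 + 1 / (2 L)` bracket `A` and `A + 4` since `log (4 π L) > 2`
  have hsqrtA : √A < c - 1 / c := by
    rw [sqrt_lt' (by rw [sub_pos, div_lt_iff₀ hc0]; nlinarith)]
    have : (c - 1 / c) ^ 2 = c ^ 2 - 2 + (1 / c) ^ 2 := by field_simp; ring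
    nlinarith
  have hsqrtA4 : √(A + 4) < c + 1 / c := by
    rw [sqrt_lt' (by positivity)]
    have : (c + 1 / c) ^ 2 = c ^ 2 + 2 + (1 / c) ^ 2 := by field_simp; ring
    nlinarith
  rw [birnbaumBound, sq_sqrt hA, stdNormalPDF_eq_of_sq_eq hL0 (sq_sqrt hA)]
  have hprod : (√(A + 4) - √A) * (√(A + 4) + √A) = 4 := by
    linear_combination sq_sqrt (by linarith : 0 ≤ A + 4) - sq_sqrt hA
  have hgap : 2 < (√(A + 4) - √A) * c := by
    have hpos : 0 < √(A + 4) - √A := by nlinarith [sqrt_nonneg A, sqrt_nonneg (A + 4)]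
    nlinarith
  have := exp_pos (-L)
  nlinarith

/-- For every `n ≥ 2`, `2 log n − log(4π log n) < bₙ² < 2 log n`. -/
theorem bn_sq_bounds (n : ℕ) (hn : 2 ≤ n)
    (b : ℝ) (hb : stdNormalCDF b = 1 - 1 / (n : ℝ)) :
    2 * Real.log n - Real.log (4 * Real.pi * Real.log n) < b ^ 2 ∧
      b ^ 2 < 2 * Real.log n := by
  have hn2 : (2 : ℝ) ≤ n := by exact_mod_cast hn
  have hL : log 2 ≤ log n := log_le_log two_pos hn2
  have htail : 1 - stdNormalCDF b = exp (-log n) := by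
    rw [hb, exp_neg, exp_log (by linarith)]; ring
  have hb0 : 0 ≤ b := by
    rw [← stdNormalCDF_strictMono.le_iff_le, stdNormalCDF_zero, hb]
    linarith [one_div_le_one_div_of_le two_pos hn2]
  constructor
  · rcases lt_or_ge (2 * log n - log (4 * π * log n)) 0 with hA_neg | hA
    · linarith [sq_nonneg b]
    have hQ := (exp_neg_lt_birnbaumBound hL hA).trans_le (birnbaumBound_le_one_sub_stdNormalCDF _)
    rw [← htail, sub_lt_sub_iff_left, stdNormalCDF_strictMono.lt_iff_lt] at hQ
    exact (sqrt_lt' ((sqrt_nonneg _).trans_lt hQ)).1 hQ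
  · have hQ := one_sub_stdNormalCDF_le hb0
    rw [htail] at hQ
    have := exp_lt_exp.1 (hQ.trans_lt (half_lt_self (exp_pos _)))
    linarith
end

section
/- For any integers n₀ ≥ 3 and n > n₀, one has b_n² > K(n₀)·log n, where K(n₀) = b_{n₀}²/log n₀; equivalently, the sequence {b_n²/log n, n ≥ 3} is strictly increasing. -/
/-!
Write `q = 1 - Φ` and `L = -log q`. The derivative of `x² / L(x)` has the sign of
`2 q(x) L(x) - x φ(x)`. For `x ≥ 3/4` the Mills-ratio bounds `x / (x² + 1) · φ(x) ≤ q(x) ≤ φ(x) / x`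
give `2 q L ≥ x φ(x) (x² + log (2π x²)) / (x² + 1) > x φ(x)`, because `2π x² > e`; for smaller
`x` with `q(x) ≤ 1/3` one has `x φ(x) ≤ 3/10` while `q ≥ 1/5` and `L ≥ log 3 > 1`. Since
`q(b_{n₀}) = 1/n₀ ≤ 1/3`, the function `x² / L(x)` increases beyond `b_{n₀}`, and `L(b_n) = log n`.
-/

open Real

open MeasureTheory ProbabilityTheory Set Filter Topology

namespace ProbabilityTheory

lemma hasDerivAt_gaussianPDFReal (μ : ℝ) (v : NNReal) (x : ℝ) :
    HasDerivAt (gaussianPDFReal μ v) (-((x - μ) / v) * gaussianPDFReal μ v x) x := by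
  have h : HasDerivAt (fun x => -(x - μ) ^ 2 / (2 * v)) (-((x - μ) / v)) x :=
    ((((hasDerivAt_id' x).sub_const μ).pow 2).neg.div_const _).congr_deriv (by push_cast; ring)
  rw [gaussianPDFReal_def]
  exact (h.exp.const_mul _).congr_deriv (by ring)

lemma continuous_gaussianPDFReal (μ : ℝ) (v : NNReal) : Continuous (gaussianPDFReal μ v) :=
  continuous_iff_continuousAt.2 fun x => (hasDerivAt_gaussianPDFReal μ v x).continuousAt

lemma gaussianPDFReal_le (μ : ℝ) (v : NNReal) (x : ℝ) :
    gaussianPDFReal μ v x ≤ (√(2 * π * v))⁻¹ := by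
  rw [gaussianPDFReal]
  refine mul_le_of_le_one_right (by positivity) (exp_le_one_iff.2 ?_)
  exact div_nonpos_of_nonpos_of_nonneg (neg_nonpos.2 (sq_nonneg _)) (by positivity)

lemma tendsto_gaussianPDFReal_atTop (μ : ℝ) (v : NNReal) :
    Tendsto (gaussianPDFReal μ v) atTop (𝓝 0) := by
  rcases eq_or_ne v 0 with rfl | hv
  · rw [gaussianPDFReal_zero_var]; exact tendsto_const_nhds
  have h : Tendsto (fun x => -(x - μ) ^ 2 / (2 * v)) atTop atBot := by
    refine Tendsto.atBot_div_const (by positivity) (tendsto_neg_atTop_atBot.comp ?_)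
    exact (tendsto_pow_atTop two_ne_zero).comp (tendsto_atTop_add_const_right _ _ tendsto_id)
  rw [gaussianPDFReal_def]
  simpa only [Function.comp_def, mul_zero] using
    (tendsto_exp_atBot.comp h).const_mul (√(2 * π * v))⁻¹

lemma gaussianPDFReal_zero_one (x : ℝ) :
    gaussianPDFReal 0 1 x = (√(2 * π))⁻¹ * exp (-x ^ 2 / 2) := by
  simp [gaussianPDFReal]

lemma neg_log_gaussianPDFReal_zero_one (x : ℝ) :
    -log (gaussianPDFReal 0 1 x) = (x ^ 2 + log (2 * π)) / 2 := by
  rw [gaussianPDFReal_zero_one, log_mul (by positivity) (exp_pos _).ne', log_inv,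
    log_sqrt (by positivity), log_exp]
  ring

end ProbabilityTheory

local notation "φ" => gaussianPDFReal 0 1

noncomputable def stdNormalTail (x : ℝ) : ℝ := ∫ t in Ioi x, φ t

lemma stdNormalCDF_eq_integral (x : ℝ) : stdNormalCDF x = ∫ t in Iic x, φ t := by
  simp only [stdNormalCDF, gaussianPDFReal_zero_one, integral_const_mul]

lemma one_sub_stdNormalCDF_s4 (x : ℝ) : 1 - stdNormalCDF x = stdNormalTail x := by
  have hφ := integrable_gaussianPDFReal 0 1
  rw [stdNormalCDF_eq_integral, ← integral_gaussianPDFReal_eq_one 0 one_ne_zero,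
    ← intervalIntegral.integral_Iic_add_Ioi hφ.integrableOn hφ.integrableOn, stdNormalTail]
  ring

lemma stdNormalTail_sub_stdNormalTail (a b : ℝ) :
    stdNormalTail a - stdNormalTail b = ∫ t in a..b, φ t :=
  intervalIntegral.integral_Ioi_sub_Ioi' (integrable_gaussianPDFReal 0 1).integrableOn
    (integrable_gaussianPDFReal 0 1).integrableOn

lemma stdNormalTail_zero : stdNormalTail 0 = 1 / 2 := by
  simp only [stdNormalTail, gaussianPDFReal_zero_one, integral_const_mul]
  have h : ∫ t in Ioi (0 : ℝ), exp (-t ^ 2 / 2) = √(2 * π) / 2 := by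
    convert integral_gaussian_Ioi (1 / 2) using 1
    · congr with t
      ring_nf
    · ring_nf
  rw [h]
  field_simp

lemma hasDerivAt_stdNormalTail (x : ℝ) : HasDerivAt stdNormalTail (-φ x) x := by
  have h : stdNormalTail = fun y => stdNormalTail 0 - ∫ t in 0..y, φ t :=
    funext fun y => by rw [← stdNormalTail_sub_stdNormalTail]; ring
  rw [h]
  exact ((continuous_gaussianPDFReal 0 1).integral_hasStrictDerivAt 0 x).hasDerivAt.const_sub _

lemma stdNormalTail_strictAnti : StrictAnti stdNormalTail :=
  strictAnti_of_hasDerivAt_neg hasDerivAt_stdNormalTail fun x =>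
    neg_neg_of_pos (gaussianPDFReal_pos 0 1 x one_ne_zero)

lemma stdNormalTail_pos (x : ℝ) : 0 < stdNormalTail x :=
  (setIntegral_nonneg measurableSet_Ioi fun t _ => gaussianPDFReal_nonneg 0 1 t).trans_lt
    (stdNormalTail_strictAnti (lt_add_one x))

lemma tendsto_stdNormalTail_atTop : Tendsto stdNormalTail atTop (𝓝 0) := by
  have h := intervalIntegral_tendsto_integral_Ioi 0 (integrable_gaussianPDFReal 0 1).integrableOn
    tendsto_id
  change Tendsto _ _ (𝓝 (stdNormalTail 0)) at h
  simpa [← stdNormalTail_sub_stdNormalTail] using h.const_sub (stdNormalTail 0)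

lemma half_sub_div_sqrt_le_stdNormalTail {x : ℝ} (hx : 0 ≤ x) :
    1 / 2 - x / √(2 * π) ≤ stdNormalTail x := by
  have h : ∫ t in 0..x, φ t ≤ ∫ t in 0..x, (√(2 * π))⁻¹ :=
    intervalIntegral.integral_mono_on hx ((continuous_gaussianPDFReal 0 1).intervalIntegrable _ _)
      intervalIntegrable_const fun t _ => by simpa using gaussianPDFReal_le 0 1 t
  rw [← stdNormalTail_sub_stdNormalTail, stdNormalTail_zero, intervalIntegral.integral_const] at h
  simp only [sub_zero, smul_eq_mul] at h
  linarith [div_eq_mul_inv x (√(2 * π))]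

lemma stdNormalTail_le_gaussianPDFReal_div {x : ℝ} (hx : 0 < x) :
    stdNormalTail x ≤ φ x / x := by
  have hderiv : ∀ t ∈ Ici x, HasDerivAt (fun t => -φ t / x) (t / x * φ t) t := fun t _ =>
    ((hasDerivAt_gaussianPDFReal 0 1 t).neg.div_const x).congr_deriv <| by
      simp only [sub_zero, NNReal.coe_one, div_one, neg_mul, neg_neg]; ring
  have hnonneg : ∀ t ∈ Ioi x, 0 ≤ t / x * φ t := fun t ht =>
    mul_nonneg (div_nonneg (hx.trans ht).le hx.le) (gaussianPDFReal_nonneg 0 1 t)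
  have hlim : Tendsto (fun t => -φ t / x) atTop (𝓝 0) := by
    simpa using (tendsto_gaussianPDFReal_atTop 0 1).neg.div_const x
  calc stdNormalTail x ≤ ∫ t in Ioi x, t / x * φ t :=
        setIntegral_mono_on (integrable_gaussianPDFReal 0 1).integrableOn
          (integrableOn_Ioi_deriv_of_nonneg' hderiv hnonneg hlim) measurableSet_Ioi fun t ht =>
            le_mul_of_one_le_left (gaussianPDFReal_nonneg 0 1 t) ((one_le_div hx).2 (le_of_lt ht))
    _ = φ x / x := by rw [integral_Ioi_of_hasDerivAt_of_nonneg' hderiv hnonneg hlim]; ring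

lemma div_mul_gaussianPDFReal_le_stdNormalTail (x : ℝ) :
    x / (x ^ 2 + 1) * φ x ≤ stdNormalTail x := by
  set G := fun t => t / (t ^ 2 + 1) * φ t - stdNormalTail t
  have hderiv : ∀ t, HasDerivAt G (2 / (t ^ 2 + 1) ^ 2 * φ t) t := fun t => by
    have ht : t ^ 2 + 1 ≠ 0 := by positivity
    refine ((((hasDerivAt_id' t).div ((hasDerivAt_pow 2 t).add_const 1) ht).mul
      (hasDerivAt_gaussianPDFReal 0 1 t)).sub (hasDerivAt_stdNormalTail t)).congr_deriv ?_
    simp only [Pi.div_apply, NNReal.coe_one, sub_zero, div_one]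
    field_simp
    ring
  have hmono : Monotone G := monotone_of_hasDerivAt_nonneg hderiv fun t =>
    mul_nonneg (by positivity) (gaussianPDFReal_nonneg 0 1 t)
  have hlim : Tendsto G atTop (𝓝 0) := by
    have h : Tendsto (fun t => t / (t ^ 2 + 1) * φ t) atTop (𝓝 0) := by
      refine squeeze_zero' ?_ ?_ (tendsto_gaussianPDFReal_atTop 0 1)
      · filter_upwards [eventually_ge_atTop 0] with t ht
        exact mul_nonneg (by positivity) (gaussianPDFReal_nonneg 0 1 t)
      · filter_upwards with t
        refine mul_le_of_le_one_left (gaussianPDFReal_nonneg 0 1 t) ?_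
        rw [div_le_one (by positivity)]
        nlinarith [sq_nonneg (t - 1)]
    simpa using h.sub tendsto_stdNormalTail_atTop
  linarith [hmono.ge_of_tendsto hlim x]

lemma mul_gaussianPDFReal_lt_of_le_three_quarters {x : ℝ} (hx : 0 < x) (hx' : x ≤ 3 / 4)
    (hq : stdNormalTail x ≤ 1 / 3) :
    x * φ x < 2 * stdNormalTail x * -log (stdNormalTail x) := by
  have hs : 5 / 2 ≤ √(2 * π) := le_sqrt_of_sq_le (by nlinarith [pi_gt_d2])
  have hφ : φ x ≤ 2 / 5 := by
    have h := gaussianPDFReal_le 0 1 x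
    rw [NNReal.coe_one, mul_one] at h
    linarith [inv_anti₀ (by norm_num) hs]
  have hq' : 1 / 5 ≤ stdNormalTail x := by
    have h : x / √(2 * π) ≤ 3 / 10 := by
      rw [div_le_iff₀ (by positivity)]
      nlinarith
    linarith [half_sub_div_sqrt_le_stdNormalTail hx.le]
  have hL : 1 < -log (stdNormalTail x) := by
    have h3 : 1 < log 3 := by
      rw [lt_log_iff_exp_lt (by norm_num)]
      linarith [exp_one_lt_d9]
    have h := log_le_log (stdNormalTail_pos x) hq
    rw [one_div, log_inv] at h
    linarith
  nlinarith [gaussianPDFReal_nonneg 0 1 x,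
    mul_le_mul hx' hφ (gaussianPDFReal_nonneg 0 1 x) (by norm_num)]

lemma mul_gaussianPDFReal_lt_of_three_quarters_le {x : ℝ} (hx : 3 / 4 ≤ x) :
    x * φ x < 2 * stdNormalTail x * -log (stdNormalTail x) := by
  have hx0 : 0 < x := by linarith
  have hφ := gaussianPDFReal_pos 0 1 x one_ne_zero
  have hL : (x ^ 2 + log (2 * π * x ^ 2)) / 2 ≤ -log (stdNormalTail x) := by
    have h := log_le_log (stdNormalTail_pos x) (stdNormalTail_le_gaussianPDFReal_div hx0)
    rw [log_div hφ.ne' hx0.ne'] at h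
    rw [log_mul (by positivity) (by positivity), log_pow]
    linarith [neg_log_gaussianPDFReal_zero_one x]
  have hlog : 1 < log (2 * π * x ^ 2) := by
    rw [lt_log_iff_exp_lt (by positivity)]
    nlinarith [exp_one_lt_d9, pi_gt_d2]
  have hsplit : x / (x ^ 2 + 1) * φ x * (x ^ 2 + log (2 * π * x ^ 2)) =
      x * φ x + x * φ x * (log (2 * π * x ^ 2) - 1) / (x ^ 2 + 1) := by
    field_simp
    ring
  calc x * φ x < x / (x ^ 2 + 1) * φ x * (x ^ 2 + log (2 * π * x ^ 2)) := by
        rw [hsplit]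
        have : 0 < x * φ x * (log (2 * π * x ^ 2) - 1) / (x ^ 2 + 1) := by
          have := sub_pos.2 hlog
          positivity
        linarith
    _ ≤ 2 * stdNormalTail x * -log (stdNormalTail x) := by
        have := mul_le_mul (div_mul_gaussianPDFReal_le_stdNormalTail x) hL (by positivity)
          (stdNormalTail_pos x).le
        linarith

lemma mul_gaussianPDFReal_lt_two_mul_stdNormalTail_mul_neg_log {x : ℝ} (hx : 0 < x)
    (hq : stdNormalTail x ≤ 1 / 3) :
    x * φ x < 2 * stdNormalTail x * -log (stdNormalTail x) := by
  rcases le_or_gt x (3 / 4) with hx' | hx'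
  · exact mul_gaussianPDFReal_lt_of_le_three_quarters hx hx' hq
  · exact mul_gaussianPDFReal_lt_of_three_quarters_le hx'.le

lemma hasDerivAt_neg_log_stdNormalTail (x : ℝ) :
    HasDerivAt (fun x => -log (stdNormalTail x)) (φ x / stdNormalTail x) x :=
  ((hasDerivAt_stdNormalTail x).log (stdNormalTail_pos x).ne').neg.congr_deriv (by ring)

lemma strictMonoOn_sq_div_neg_log_stdNormalTail {b : ℝ} (hb : stdNormalTail b ≤ 1 / 3) :
    StrictMonoOn (fun x => x ^ 2 / -log (stdNormalTail x)) (Ici b) := by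
  have hq : ∀ x ∈ Ici b, stdNormalTail x ≤ 1 / 3 := fun x hx =>
    (stdNormalTail_strictAnti.antitone hx).trans hb
  have hpos : ∀ x ∈ Ici b, 0 < x := fun x hx =>
    stdNormalTail_strictAnti.lt_iff_gt.1 (by rw [stdNormalTail_zero]; linarith [hq x hx])
  have hL : ∀ x ∈ Ici b, 0 < -log (stdNormalTail x) := fun x hx =>
    neg_pos.2 (log_neg (stdNormalTail_pos x) (by linarith [hq x hx]))
  have hderiv : ∀ x ∈ Ici b, HasDerivAt (fun x => x ^ 2 / -log (stdNormalTail x))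
      ((2 * x * -log (stdNormalTail x) - x ^ 2 * (φ x / stdNormalTail x)) /
        (-log (stdNormalTail x)) ^ 2) x := fun x hx =>
    ((hasDerivAt_pow 2 x).div (hasDerivAt_neg_log_stdNormalTail x) (hL x hx).ne').congr_deriv
      (by push_cast; ring)
  refine strictMonoOn_of_hasDerivWithinAt_pos (convex_Ici b)
    (fun x hx => (hderiv x hx).continuousAt.continuousWithinAt)
    (fun x hx => (hderiv x (interior_subset hx)).hasDerivWithinAt) fun x hx => ?_
  have hx := interior_subset hx
  have hkey := mul_gaussianPDFReal_lt_two_mul_stdNormalTail_mul_neg_log (hpos x hx) (hq x hx)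
  have hx0 := hpos x hx
  have hq0 := stdNormalTail_pos x
  refine div_pos ?_ (pow_pos (hL x hx) 2)
  rw [sub_pos, mul_div_assoc', div_lt_iff₀ hq0]
  nlinarith

/-- For `n₀ ≥ 3` and `n > n₀`, `bₙ² > (b_{n₀}²/log n₀)·log n`,
i.e. the sequence `bₙ²/log n` is strictly increasing. -/
theorem bn_sq_div_log_strictMono (n₀ n : ℕ) (hn₀ : 3 ≤ n₀) (hn : n₀ < n)
    (b₀ bn : ℝ) (hb₀ : stdNormalCDF b₀ = 1 - 1 / (n₀ : ℝ))
    (hbn : stdNormalCDF bn = 1 - 1 / (n : ℝ)) :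
    bn ^ 2 > (b₀ ^ 2 / Real.log n₀) * Real.log n := by
  have hn₀' : (3 : ℝ) ≤ n₀ := by exact_mod_cast hn₀
  have hn' : (n₀ : ℝ) < n := by exact_mod_cast hn
  have hq₀ : stdNormalTail b₀ = (n₀ : ℝ)⁻¹ := by rw [← one_sub_stdNormalCDF_s4, hb₀]; ring
  have hqn : stdNormalTail bn = (n : ℝ)⁻¹ := by rw [← one_sub_stdNormalCDF_s4, hbn]; ring
  have hq₀_le : stdNormalTail b₀ ≤ 1 / 3 := by
    rw [hq₀, one_div]
    exact inv_anti₀ (by norm_num) hn₀'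
  have hlt : b₀ < bn := stdNormalTail_strictAnti.lt_iff_gt.1 <| by
    rw [hq₀, hqn]
    exact inv_strictAnti₀ (by positivity) hn'
  have h := strictMonoOn_sq_div_neg_log_stdNormalTail hq₀_le self_mem_Ici hlt.le hlt
  simp only [hq₀, hqn, log_inv, neg_neg] at h
  rw [gt_iff_lt, ← lt_div_iff₀ (log_pos (by linarith))]
  exact h
end

section
/- As n → ∞, b_n* − β_n* = O((log log n)²/(log n)^{3/2}), where β_n* = (2 log n)^{1/2} − (log log n + log(4π))/(2 (2 log n)^{1/2}). -/
/-!
Taking logarithms, `bₙ*` is the root of `gaussLevel b = log n`. Write `L = log n`. One computes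
`βₙ* = √(2L)(1 - t)` with `t = (log L + log 4π)/(4L)`, and then exactly
`gaussLevel βₙ* = L + L t² + log (1 - t)`, whose defect `L t² + log (1 - t)` is
`O((log L)²/L)`. Both `bₙ*` and `βₙ*` are at least `√L`, where `gaussLevel` has slope
`x + 1/x ≥ √L`; so `|bₙ* - βₙ*| ≤ defect / √L = O((log L)²/L^{3/2})`.
-/

open Real Filter Asymptotics

/-- `-log` of `(2π)^{-1/2} x⁻¹ e^{-x²/2}`. -/
noncomputable def gaussLevel (x : ℝ) : ℝ := x ^ 2 / 2 + log x + log (2 * π) / 2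

noncomputable def betaStar (L : ℝ) : ℝ := √(2 * L) - (log L + log (4 * π)) / (2 * √(2 * L))

noncomputable def betaStarCorrection (L : ℝ) : ℝ := (log L + log (4 * π)) / (4 * L)

lemma gaussLevel_eq_log_of_eq_one_div {x y : ℝ} (hx : 0 < x)
    (h : (√(2 * π))⁻¹ * x⁻¹ * exp (-x ^ 2 / 2) = 1 / y) : gaussLevel x = log y := by
  have hlog := congrArg log h
  rw [log_mul (by positivity) (exp_ne_zero _), log_mul (by positivity) (by positivity),
    log_inv, log_inv, log_exp, log_sqrt (by positivity), one_div, log_inv] at hlog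
  unfold gaussLevel
  linarith

lemma mul_abs_sub_le_abs_gaussLevel_sub {m x y : ℝ} (hm : 0 < m) (hx : m ≤ x) (hy : m ≤ y) :
    m * |x - y| ≤ |gaussLevel x - gaussLevel y| := by
  wlog hyx : y ≤ x generalizing x y
  · rw [abs_sub_comm, abs_sub_comm (gaussLevel x)]
    exact this hy hx (le_of_not_ge hyx)
  have hlog : log y ≤ log x := log_le_log (hm.trans_le hy) hyx
  rw [abs_of_nonneg (sub_nonneg.2 hyx)]
  refine le_trans ?_ (le_abs_self _)
  unfold gaussLevel
  nlinarith

lemma log_le_half_self {L : ℝ} (hL : 16 ≤ L) : log L ≤ L / 2 := by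
  have hm : 4 ≤ √L := (le_sqrt (by norm_num) (by linarith)).2 (by linarith)
  have hmsq : √L ^ 2 = L := sq_sqrt (by linarith)
  have hlog : log √L ≤ √L - 1 := log_le_sub_one_of_pos (by linarith)
  rw [log_sqrt (by linarith)] at hlog
  nlinarith

lemma sqrt_le_of_gaussLevel_eq {L b : ℝ} (hL : 16 ≤ L) (hb : 0 < b) (h : gaussLevel b = L) :
    √L ≤ b := by
  by_contra! hlt
  have hm : 4 ≤ √L := (le_sqrt (by norm_num) (by linarith)).2 (by linarith)
  have hmsq : √L ^ 2 = L := sq_sqrt (by linarith)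
  have hlogb : log b ≤ √L - 1 :=
    (log_le_log hb hlt.le).trans (log_le_sub_one_of_pos (by linarith))
  have hlog2π : log (2 * π) ≤ 2 * π - 1 := log_le_sub_one_of_pos (by positivity)
  have hb2 : b ^ 2 ≤ L := by nlinarith
  unfold gaussLevel at h
  nlinarith [pi_lt_d2]

lemma neg_two_mul_le_log_one_sub {t : ℝ} (ht0 : 0 ≤ t) (ht : t ≤ 1 / 2) :
    -(2 * t) ≤ log (1 - t) := by
  have hpos : 0 < 1 - t := by linarith
  refine le_trans ?_ (one_sub_inv_le_log_of_pos hpos)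
  rw [show 1 - (1 - t)⁻¹ = -t / (1 - t) by field_simp; ring, le_div_iff₀ hpos]
  nlinarith

section betaStar

variable {L : ℝ}

lemma betaStar_eq_sqrt_mul_one_sub (hL : 0 < L) :
    betaStar L = √(2 * L) * (1 - betaStarCorrection L) := by
  have hs : √(2 * L) ^ 2 = 2 * L := sq_sqrt (by linarith)
  have hs0 : 0 < √(2 * L) := sqrt_pos.2 (by linarith)
  unfold betaStar betaStarCorrection
  field_simp
  linear_combination 2 * (log L + log (4 * π)) * hs

lemma gaussLevel_betaStar (hL : 0 < L) (h1 : betaStarCorrection L < 1) :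
    gaussLevel (betaStar L) =
      L + L * betaStarCorrection L ^ 2 + log (1 - betaStarCorrection L) := by
  set t := betaStarCorrection L with ht
  have htL : 4 * L * t = log L + log (4 * π) := by
    rw [ht, betaStarCorrection]; field_simp
  have hs : √(2 * L) ^ 2 = 2 * L := sq_sqrt (by linarith)
  have h4π : log (4 * π) = 2 * log 2 + log π := by
    rw [show (4 : ℝ) * π = 2 * 2 * π by ring, log_mul (by norm_num) (by positivity),
      log_mul (by norm_num) (by norm_num)]
    ring
  rw [betaStar_eq_sqrt_mul_one_sub hL, gaussLevel, log_mul (by positivity) (by linarith),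
    log_sqrt (by linarith), log_mul (by norm_num) hL.ne', log_mul (by norm_num) pi_ne_zero,
    mul_pow, hs]
  linear_combination (-1 / 2) * htL - (1 / 2) * h4π

lemma betaStarCorrection_nonneg (hL : 1 ≤ L) : 0 ≤ betaStarCorrection L :=
  div_nonneg (add_nonneg (log_nonneg hL) (log_nonneg (by linarith [pi_gt_three])))
    (by linarith)

lemma mul_betaStarCorrection_le (hL : 16 ≤ L) : L * betaStarCorrection L ≤ log L / 2 := by
  have hlog4π : log (4 * π) ≤ log L := log_le_log (by positivity) (by linarith [pi_le_four])
  rw [betaStarCorrection, mul_div_assoc', div_le_div_iff₀ (by linarith) (by norm_num)]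
  nlinarith

lemma betaStarCorrection_le (hL : 16 ≤ L) : betaStarCorrection L ≤ 1 / 4 := by
  nlinarith [mul_betaStarCorrection_le hL, log_le_half_self hL]

lemma sqrt_le_betaStar (hL : 16 ≤ L) : √L ≤ betaStar L := by
  have h2 : 7 / 5 ≤ √2 := (le_sqrt (by norm_num) (by norm_num)).2 (by norm_num)
  have h1 : 1 ≤ √2 * (1 - betaStarCorrection L) := by nlinarith [betaStarCorrection_le hL]
  rw [betaStar_eq_sqrt_mul_one_sub (by linarith), sqrt_mul' _ (by linarith), mul_right_comm]
  exact le_mul_of_one_le_left (sqrt_nonneg L) h1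

lemma abs_gaussLevel_betaStar_sub_le (hL : 16 ≤ L) :
    |gaussLevel (betaStar L) - L| ≤ (log L) ^ 2 / L := by
  have hL0 : 0 < L := by linarith
  have hlogL : 1 ≤ log L := by
    rw [le_log_iff_exp_le hL0]; linarith [exp_one_lt_d9]
  have ht0 := betaStarCorrection_nonneg (L := L) (by linarith)
  have ht4 := betaStarCorrection_le hL
  have hLt := mul_betaStarCorrection_le hL
  rw [gaussLevel_betaStar hL0 (by linarith)]
  set t := betaStarCorrection L
  have hlo := neg_two_mul_le_log_one_sub ht0 (by linarith)
  have hhi : log (1 - t) ≤ 0 := log_nonpos (by linarith) (by linarith)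
  have hsq : L * t ^ 2 ≤ (log L) ^ 2 / L := by
    rw [le_div_iff₀ hL0]
    nlinarith [mul_le_mul hLt hLt (by positivity) (by positivity)]
  have hlin : 2 * t ≤ (log L) ^ 2 / L := by rw [le_div_iff₀ hL0]; nlinarith
  rw [abs_le]
  constructor <;> nlinarith [sq_nonneg t]

lemma abs_sub_betaStar_le {b : ℝ} (hL : 16 ≤ L) (hb : 0 < b) (h : gaussLevel b = L) :
    |b - betaStar L| ≤ (log L) ^ 2 / L ^ ((3 : ℝ) / 2) := by
  have hL0 : 0 < L := by linarith
  have hm0 : 0 < √L := sqrt_pos.2 hL0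
  have hslope := mul_abs_sub_le_abs_gaussLevel_sub hm0 (sqrt_le_of_gaussLevel_eq hL hb h)
    (sqrt_le_betaStar hL)
  rw [h, abs_sub_comm L] at hslope
  have hpow : L ^ ((3 : ℝ) / 2) = L * √L := by
    rw [show (3 : ℝ) / 2 = 1 + 1 / 2 by norm_num, rpow_add hL0, rpow_one, sqrt_eq_rpow]
  rw [hpow, ← div_div, le_div_iff₀ hm0, mul_comm]
  exact hslope.trans (abs_gaussLevel_betaStar_sub_le hL)

end betaStar

/-- `bₙ* − βₙ* = O((log log n)²/(log n)^{3/2})` as `n → ∞`, where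
`βₙ* = (2 log n)^{1/2} − (log log n + log(4π))/(2(2 log n)^{1/2})`. -/
theorem bnstar_sub_betastar (bs : ℕ → ℝ)
    (hbs : ∀ n : ℕ, 2 ≤ n → 0 < bs n ∧
      (Real.sqrt (2 * Real.pi))⁻¹ * (bs n)⁻¹ * Real.exp (-(bs n) ^ 2 / 2) = 1 / (n : ℝ)) :
    (fun n : ℕ =>
        bs n - (Real.sqrt (2 * Real.log n)
          - (Real.log (Real.log n) + Real.log (4 * Real.pi))
              / (2 * Real.sqrt (2 * Real.log n))))
      =O[atTop]
    (fun n : ℕ => (Real.log (Real.log n)) ^ 2 / (Real.log n) ^ ((3 : ℝ) / 2)) := by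
  have hlog : ∀ᶠ n : ℕ in atTop, 16 ≤ log n :=
    (tendsto_log_atTop.comp tendsto_natCast_atTop_atTop).eventually_ge_atTop 16
  refine IsBigO.of_bound' ?_
  filter_upwards [eventually_ge_atTop 2, hlog] with n hn hL
  obtain ⟨hb, hdensity⟩ := hbs n hn
  rw [norm_eq_abs, norm_of_nonneg (div_nonneg (sq_nonneg _) (rpow_nonneg (by linarith) _))]
  exact abs_sub_betaStar_le hL hb (gaussLevel_eq_log_of_eq_one_div hb hdensity)
end

section
/- As n → ∞, b_n* − β̄_n* = O((log log n)²/(log n)^{5/2}), where β̄_n* = (log(n²/(2π)) − log log(n²/(2π)) + log log(n²/(2π))/log(n²/(2π)))^{1/2}. -/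
open Real Filter Asymptotics

/-! Taking logarithms in the defining equation, `x = (bₙ*)²` solves `x + log x = L` with
`L = log (n² / 2π)`. The approximation `y = L - log L + log L / L` satisfies
`y + log y = L + O((log L)² / L²)`, and since `x ↦ x + log x` has slope at least one,
`|x - y| = O((log L)² / L²)`. Dividing by `√x + √y ≥ √(L / 2)` gives
`√x - √y = O((log L)² / L^{5/2})`, and `log n ≤ L ≤ (log n)²` for large `n`. -/

lemma abs_log_one_sub_add_le {u : ℝ} (hu : |u| ≤ 1 / 2) : |log (1 - u) + u| ≤ 2 * u ^ 2 := by
  have h := abs_log_sub_add_sum_range_le (hu.trans_lt (by norm_num)) 1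
  simp only [Finset.sum_range_one, zero_add, pow_one, Nat.cast_zero, div_one] at h
  rw [add_comm]
  calc |u + log (1 - u)| ≤ |u| ^ 2 / (1 - |u|) := h
    _ ≤ 2 * u ^ 2 := by
      rw [div_le_iff₀ (by linarith), sq_abs]
      nlinarith [sq_nonneg u]

lemma log_le_half_self_s16 {x : ℝ} (hx : 0 < x) : log x ≤ x / 2 := by
  have h := log_le_sub_one_of_pos (half_pos hx)
  rw [log_div hx.ne' two_ne_zero] at h
  linarith [log_two_lt_d9]

lemma abs_sub_le_abs_add_log_sub_add_log {x y : ℝ} (hx : 0 < x) (hy : 0 < y) :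
    |x - y| ≤ |(x + log x) - (y + log y)| := by
  rcases le_total x y with h | h
  · have := log_le_log hx h
    rw [abs_of_nonpos (by linarith), abs_of_nonpos (by linarith)]
    linarith
  · have := log_le_log hy h
    rw [abs_of_nonneg (by linarith), abs_of_nonneg (by linarith)]
    linarith

lemma abs_sqrt_sub_sqrt_le {x y : ℝ} (hx : 0 ≤ x) (hy : 0 < y) :
    |√x - √y| ≤ |x - y| / √y := by
  have hxy : (√x - √y) * (√x + √y) = x - y := by
    linear_combination sq_sqrt hx - sq_sqrt hy.le
  rw [le_div_iff₀ (sqrt_pos.mpr hy)]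
  calc |√x - √y| * √y ≤ |√x - √y| * (√x + √y) := by
        gcongr
        exact le_add_of_nonneg_left (sqrt_nonneg x)
    _ = |x - y| := by
        rw [← hxy, abs_mul, abs_of_nonneg (by positivity : 0 ≤ √x + √y)]

-- Second-order asymptotic solution of `x + log x = L`; for `L = log (n² / 2π)` it is `(β̄ₙ*)²`.
noncomputable def addLogApprox (L : ℝ) : ℝ := L - log L + log L / L

lemma half_le_addLogApprox {L : ℝ} (hL : 1 ≤ L) : L / 2 ≤ addLogApprox L := by
  have h₁ := log_le_half_self_s16 (by linarith : 0 < L)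
  have h₂ : 0 ≤ log L / L := div_nonneg (log_nonneg hL) (by linarith)
  unfold addLogApprox
  linarith

lemma abs_addLogApprox_add_log_sub_le {L : ℝ} (hL : exp 1 ≤ L) :
    |addLogApprox L + log (addLogApprox L) - L| ≤ 3 * log L ^ 2 / L ^ 2 := by
  have hL1 : 1 ≤ L := by linarith [add_one_le_exp 1]
  have hL0 : 0 < L := by linarith
  have hl : 1 ≤ log L := by rwa [le_log_iff_exp_le hL0]
  have hlL : log L / L ≤ 1 / 2 := by
    rw [div_le_iff₀ hL0]
    linarith [log_le_half_self_s16 hL0]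
  have hlL2 : 0 ≤ log L / L ^ 2 := by positivity
  set u := log L / L - log L / L ^ 2 with hu
  have hu_nonneg : 0 ≤ u := by
    rw [hu, sub_nonneg]
    exact div_le_div_of_nonneg_left (by linarith) hL0 (by nlinarith)
  have hu_le : u ≤ log L / L := by linarith
  have hu_half : |u| ≤ 1 / 2 := by rw [abs_of_nonneg hu_nonneg]; linarith
  -- `addLogApprox L = L * (1 - u)`, so its log is `log L + log (1 - u) ≈ log L - u`.
  have hsplit :
      addLogApprox L + log (addLogApprox L) - L = (log (1 - u) + u) + log L / L ^ 2 := by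
    have happrox : addLogApprox L = L * (1 - u) := by
      rw [hu]
      unfold addLogApprox
      field_simp
      ring
    rw [happrox, log_mul hL0.ne' (by linarith), ← happrox]
    unfold addLogApprox
    ring
  calc |addLogApprox L + log (addLogApprox L) - L|
      ≤ |log (1 - u) + u| + |log L / L ^ 2| := by rw [hsplit]; exact abs_add_le _ _
    _ ≤ 2 * (log L / L) ^ 2 + log L ^ 2 / L ^ 2 := by
        rw [abs_of_nonneg hlL2]
        gcongr
        · exact (abs_log_one_sub_add_le hu_half).trans (by gcongr)
        · nlinarith
    _ = 3 * log L ^ 2 / L ^ 2 := by ring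

theorem abs_sqrt_sub_sqrt_addLogApprox_le {L x : ℝ} (hL : exp 1 ≤ L) (hx : 0 < x)
    (hxL : x + log x = L) :
    |√x - √(addLogApprox L)| ≤ 5 * log L ^ 2 / L ^ ((5 : ℝ) / 2) := by
  have hL1 : 1 ≤ L := by linarith [add_one_le_exp 1]
  have hL0 : 0 < L := by linarith
  have hy := half_le_addLogApprox hL1
  have hdiff : |x - addLogApprox L| ≤ 3 * log L ^ 2 / L ^ 2 :=
    calc |x - addLogApprox L|
        ≤ |(x + log x) - (addLogApprox L + log (addLogApprox L))| :=
          abs_sub_le_abs_add_log_sub_add_log hx (by linarith)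
      _ = |addLogApprox L + log (addLogApprox L) - L| := by rw [hxL, abs_sub_comm]
      _ ≤ 3 * log L ^ 2 / L ^ 2 := abs_addLogApprox_add_log_sub_le hL
  have hrpow : L ^ ((5 : ℝ) / 2) = L ^ 2 * √L := by
    rw [show (5 : ℝ) / 2 = (2 : ℕ) + 1 / 2 by norm_num, rpow_add hL0, rpow_natCast,
      ← sqrt_eq_rpow]
  -- `3 / √(1 / 2) = 3 √2 ≤ 5`
  have hsqrt : 3 * √L ≤ 5 * √(L / 2) := by
    refine (sq_le_sq₀ (by positivity) (by positivity)).mp ?_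
    rw [mul_pow, mul_pow, sq_sqrt hL0.le, sq_sqrt (by positivity)]
    linarith
  calc |√x - √(addLogApprox L)| ≤ |x - addLogApprox L| / √(addLogApprox L) :=
        abs_sqrt_sub_sqrt_le hx.le (by linarith)
    _ ≤ 3 * log L ^ 2 / L ^ 2 / √(L / 2) := by gcongr
    _ ≤ 5 * log L ^ 2 / L ^ ((5 : ℝ) / 2) := by
        rw [hrpow, div_div, div_le_div_iff₀ (by positivity) (by positivity)]
        have : 0 ≤ log L ^ 2 * L ^ 2 := by positivity
        nlinarith [mul_le_mul_of_nonneg_left hsqrt this]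

lemma sq_add_log_sq_eq_of_gaussian_density {b t : ℝ} (hb : 0 < b)
    (h : (√(2 * π))⁻¹ * b⁻¹ * exp (-b ^ 2 / 2) = 1 / t) :
    b ^ 2 + log (b ^ 2) = log (t ^ 2 / (2 * π)) := by
  have ht0 : t ≠ 0 := by
    rintro rfl
    rw [div_zero] at h
    exact (by positivity : (0 : ℝ) < _).ne' h
  field_simp at h
  have ht : t = √(2 * π) * b * exp (b ^ 2 / 2) := by
    rw [← h, mul_right_comm, ← exp_add, neg_add_cancel, exp_zero, one_mul]
  have hsq : t ^ 2 / (2 * π) = b ^ 2 * exp (b ^ 2) := by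
    rw [ht, mul_pow, mul_pow, sq_sqrt (by positivity), sq (exp _), ← exp_add, add_halves]
    field_simp
  rw [hsq, log_mul (by positivity) (exp_pos _).ne', log_exp, add_comm]

lemma log_sq_div_two_pi_mem_Icc {x : ℝ} (hx : 7 ≤ log x) :
    log (x ^ 2 / (2 * π)) ∈ Set.Icc (log x) (log x ^ 2) := by
  have hx0 : x ≠ 0 := by rintro rfl; norm_num at hx
  have hL : log (x ^ 2 / (2 * π)) = 2 * log x - log (2 * π) := by
    rw [log_div (pow_ne_zero 2 hx0) (by positivity), log_pow]
    push_cast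
    ring
  have h2π : 0 ≤ log (2 * π) := log_nonneg (by nlinarith [pi_gt_three])
  have h2π' : log (2 * π) ≤ 7 := by
    linarith [log_le_sub_one_of_pos (by positivity : 0 < 2 * π), pi_le_four]
  rw [hL, Set.mem_Icc]
  constructor <;> nlinarith

lemma log_sq_div_rpow_le_of_le_sq {a L p : ℝ} (ha : 1 ≤ a) (haL : a ≤ L) (hLa : L ≤ a ^ 2)
    (hp : 0 ≤ p) : log L ^ 2 / L ^ p ≤ 4 * (log a ^ 2 / a ^ p) := by
  have hlog : log L ≤ 2 * log a := by
    rw [← log_rpow (by linarith), rpow_two]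
    exact log_le_log (by linarith) hLa
  calc log L ^ 2 / L ^ p ≤ (2 * log a) ^ 2 / a ^ p := by
        gcongr
        exact log_nonneg (by linarith)
    _ = 4 * (log a ^ 2 / a ^ p) := by ring

/-- `bₙ* − β̄ₙ* = O((log log n)²/(log n)^{5/2})` as `n → ∞`, where
`β̄ₙ* = (log(n²/(2π)) − log log(n²/(2π)) + log log(n²/(2π))/log(n²/(2π)))^{1/2}`. -/
theorem bnstar_sub_betabarstar (bs : ℕ → ℝ)
    (hbs : ∀ n : ℕ, 2 ≤ n → 0 < bs n ∧
      (Real.sqrt (2 * Real.pi))⁻¹ * (bs n)⁻¹ * Real.exp (-(bs n) ^ 2 / 2) = 1 / (n : ℝ)) :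
    (fun n : ℕ =>
        bs n - Real.sqrt (Real.log ((n : ℝ) ^ 2 / (2 * Real.pi))
          - Real.log (Real.log ((n : ℝ) ^ 2 / (2 * Real.pi)))
          + Real.log (Real.log ((n : ℝ) ^ 2 / (2 * Real.pi)))
              / Real.log ((n : ℝ) ^ 2 / (2 * Real.pi))))
      =O[atTop]
    (fun n : ℕ => (Real.log (Real.log n)) ^ 2 / (Real.log n) ^ ((5 : ℝ) / 2)) := by
  have hlog : Tendsto (fun n : ℕ => log n) atTop atTop :=
    tendsto_log_atTop.comp tendsto_natCast_atTop_atTop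
  refine isBigO_iff.mpr ⟨20, ?_⟩
  filter_upwards [hlog.eventually_ge_atTop 7, eventually_ge_atTop 2] with n hlogn hn
  obtain ⟨hb, hgauss⟩ := hbs n hn
  obtain ⟨hL_ge, hL_le⟩ := log_sq_div_two_pi_mem_Icc hlogn
  have hL : exp 1 ≤ log ((n : ℝ) ^ 2 / (2 * π)) := by linarith [exp_one_lt_d9]
  have key := abs_sqrt_sub_sqrt_addLogApprox_le hL (by positivity)
    (sq_add_log_sq_eq_of_gaussian_density hb hgauss)
  rw [sqrt_sq hb.le] at key
  rw [norm_eq_abs, norm_of_nonneg (by positivity)]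
  calc _ ≤ _ := key
    _ ≤ 5 * (4 * (log (log n) ^ 2 / log n ^ ((5 : ℝ) / 2))) := by
        rw [mul_div_assoc]
        gcongr
        exact log_sq_div_rpow_le_of_le_sq (by linarith) hL_ge hL_le (by norm_num)
    _ = 20 * (log (log n) ^ 2 / log n ^ ((5 : ℝ) / 2)) := by ring
end

section
/- For every real y ≥ 1, (4/e²)·y²·exp(((2 − 23 y²)/(10 (y² + 1)))·log y) < 2/3. -/
/-!
Since `y² = exp (2 log y)`, the left-hand side is `4 e⁻² exp (c(y) log y)` with
`c(y) = (22 − 3y²) / (10 (y² + 1))`. Where `c(y) ≥ 0`, the bound `log y ≤ sinh (log y) = (y − y⁻¹)/2`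
reduces `c(y) log y ≤ 1/5` to the quartic inequality `3y⁴ + 4y³ − 25y² + 4y + 22 ≥ 0` on `y ≥ 1`.
It remains to check `6 e^{1/5} < e²`, i.e. `6⁵ < e⁹`, which follows from `e > 2.71`.
-/

open Real

lemma Real.log_le_sub_inv_div_two {x : ℝ} (hx : 1 ≤ x) : log x ≤ (x - x⁻¹) / 2 := by
  rw [← sinh_log (by linarith)]
  exact self_le_sinh_iff.2 (log_nonneg hx)

lemma Real.pow_mul_exp_mul_log {x : ℝ} (hx : 0 < x) (n : ℕ) (a : ℝ) :
    x ^ n * exp (a * log x) = exp ((n + a) * log x) := by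
  rw [add_mul, exp_add, exp_nat_mul, exp_log hx]

-- In `t = y - 1` the quartic is `3t⁴ + 16t³ + 5t² − 22t + 8`, whose minimum on `t ≥ 0` is only
-- about `0.35` (near `t = 0.55`); the two squares below are a certificate for it.
lemma quartic_nonneg_of_one_le {y : ℝ} (hy : 1 ≤ y) :
    0 ≤ 3 * y ^ 4 + 4 * y ^ 3 - 25 * y ^ 2 + 4 * y + 22 := by
  nlinarith [sq_nonneg ((y - 1) ^ 2 + 113 / 50 * (y - 1) - 163 / 100),
    mul_nonneg (sub_nonneg.2 hy) (sq_nonneg (1562 / 1000 * (y - 1) - 174 / 1000))]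

lemma div_mul_log_le_one_fifth {y : ℝ} (hy : 1 ≤ y) :
    (22 - 3 * y ^ 2) / (10 * (y ^ 2 + 1)) * log y ≤ 1 / 5 := by
  have hy0 : 0 < y := by linarith
  rcases le_total (22 - 3 * y ^ 2) 0 with hneg | hpos
  · refine le_trans ?_ (by norm_num : (0 : ℝ) ≤ 1 / 5)
    exact mul_nonpos_of_nonpos_of_nonneg (div_nonpos_of_nonpos_of_nonneg hneg (by positivity))
      (log_nonneg hy)
  · calc (22 - 3 * y ^ 2) / (10 * (y ^ 2 + 1)) * log y
        ≤ (22 - 3 * y ^ 2) / (10 * (y ^ 2 + 1)) * ((y - y⁻¹) / 2) := by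
          gcongr
          exact log_le_sub_inv_div_two hy
      _ ≤ 1 / 5 := by
          rw [div_mul_div_comm, div_le_div_iff₀ (by positivity) (by norm_num)]
          field_simp
          nlinarith [quartic_nonneg_of_one_le hy]

lemma six_mul_exp_one_fifth_lt_exp_two : 6 * exp (1 / 5) < exp 2 := by
  have he : (2.71 : ℝ) < exp 1 := lt_trans (by norm_num) exp_one_gt_d9
  have h9 : (6 : ℝ) ^ 5 < exp 1 ^ 9 :=
    lt_trans (by norm_num) (pow_lt_pow_left₀ he (by norm_num) (by norm_num))
  have h1 : exp (1 / 5) ^ 5 = exp 1 := by rw [← exp_nat_mul]; norm_num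
  have h2 : exp 2 ^ 5 = exp 1 ^ 9 * exp 1 := by
    rw [← pow_succ, ← exp_nat_mul, ← exp_nat_mul]; norm_num
  refine lt_of_pow_lt_pow_left₀ 5 (exp_pos 2).le ?_
  rw [mul_pow, h1, h2]
  exact mul_lt_mul_of_pos_right h9 (exp_pos 1)

/-- For every real `y ≥ 1`, `(4/e²)·y²·exp(((2 − 23 y²)/(10 (y² + 1)))·log y) < 2/3`. -/
theorem aux_ineq_P (y : ℝ) (hy : 1 ≤ y) :
    4 / Real.exp 1 ^ 2 * y ^ 2 *
        Real.exp ((2 - 23 * y ^ 2) / (10 * (y ^ 2 + 1)) * Real.log y) < 2 / 3 := by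
  have hy0 : 0 < y := by linarith
  calc 4 / exp 1 ^ 2 * y ^ 2 * exp ((2 - 23 * y ^ 2) / (10 * (y ^ 2 + 1)) * log y)
      = 4 / exp 1 ^ 2 * exp ((22 - 3 * y ^ 2) / (10 * (y ^ 2 + 1)) * log y) := by
        rw [mul_assoc, pow_mul_exp_mul_log hy0]
        congr 3
        field_simp
        ring
    _ ≤ 4 / exp 1 ^ 2 * exp (1 / 5) := by gcongr; exact div_mul_log_le_one_fifth hy
    _ < 2 / 3 := by
        rw [← exp_nat_mul, div_mul_eq_mul_div, div_lt_div_iff₀ (exp_pos _) (by norm_num)]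
        push_cast
        linarith [six_mul_exp_one_fifth_lt_exp_two]
end
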